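/- arXiv:2312.04489 — 3 statements merged into one kernel-verified Lean document; each statement's English description precedes it below -/
import Mathlib

section
/- If f is a solution of the ODE u' = φ(x,u), then the curve γ_f(t) = (t, f(t)) satisfies the geodesic equation of the metric g = (1+φ²)dx² - 2φ dx du + du², i.e., the covariant derivative of its tangent vector along itself vanishes; in components relative to the frame {A, ∂_u}, both components of ∇_{γ̇}γ̇ given by (-φ_u(f'-φ)², f'' - φφ_u - φ_x) vanish. -/
theorem HasFDerivAt.hasDerivAt_comp_graph {𝕜 : Type*} [NontriviallyNormedField 𝕜]
    {φ : 𝕜 × 𝕜 → 𝕜} {f : 𝕜 → 𝕜} {a b v t : 𝕜}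
    (hφ : HasFDerivAt φ (a • ContinuousLinearMap.fst 𝕜 𝕜 𝕜 + b • ContinuousLinearMap.snd 𝕜 𝕜 𝕜)
      (t, f t))
    (hf : HasDerivAt f v t) :
    HasDerivAt (fun s => φ (s, f s)) (a + b * v) t := by
  simpa [Function.comp_def] using hφ.comp_hasDerivAt t ((hasDerivAt_id t).prodMk hf)

theorem deriv_eq_of_eqOn_comp_graph {𝕜 : Type*} [NontriviallyNormedField 𝕜]
    {φ : 𝕜 × 𝕜 → 𝕜} {f f' : 𝕜 → 𝕜} {a b f'' t : 𝕜} {I : Set 𝕜} (hI : I ∈ nhds t)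
    (hφ : HasFDerivAt φ (a • ContinuousLinearMap.fst 𝕜 𝕜 𝕜 + b • ContinuousLinearMap.snd 𝕜 𝕜 𝕜)
      (t, f t))
    (hf : HasDerivAt f (f' t) t) (hf' : HasDerivAt f' f'' t)
    (hsol : Set.EqOn f' (fun s => φ (s, f s)) I) :
    f'' = a + b * f' t :=
  hf'.unique <| (hφ.hasDerivAt_comp_graph hf).congr_of_eventuallyEq
    (Filter.eventuallyEq_of_mem hI hsol)

theorem stmt2_general (U : Set (ℝ × ℝ)) (φ φx φu : ℝ × ℝ → ℝ)
    (hφ : ∀ p ∈ U, HasFDerivAt φ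
      (φx p • ContinuousLinearMap.fst ℝ ℝ ℝ + φu p • ContinuousLinearMap.snd ℝ ℝ ℝ) p)
    (I : Set ℝ) (hI : IsOpen I) (f f' f'' : ℝ → ℝ)
    (hgraph : ∀ t ∈ I, (t, f t) ∈ U)
    (hf : ∀ t ∈ I, HasDerivAt f (f' t) t)
    (hf' : ∀ t ∈ I, HasDerivAt f' (f'' t) t)
    (hsol : ∀ t ∈ I, f' t = φ (t, f t)) :
    ∀ t ∈ I,
      -(φu (t, f t)) * (f' t - φ (t, f t))^2 = 0 ∧
      f'' t - φ (t, f t) * φu (t, f t) - φx (t, f t) = 0 := by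
  intro t ht
  have hf'' : f'' t = φx (t, f t) + φu (t, f t) * f' t :=
    deriv_eq_of_eqOn_comp_graph (hI.mem_nhds ht) (hφ _ (hgraph t ht)) (hf t ht) (hf' t ht) hsol
  constructor
  · rw [hsol t ht, sub_self]; ring
  · rw [hf'', hsol t ht]; ring

/-- If f solves u' = φ(x,u), then the curve γ_f(t) = (t, f(t))
satisfies the geodesic equation: both components (relative to the frame
{A, ∂_u}) of the covariant derivative of its tangent along itself, namely
(-φ_u(f'-φ)², f'' - φφ_u - φ_x), vanish. -/
theorem stmt2 (U : Set (ℝ × ℝ)) (hU : IsOpen U) (φ φx φu : ℝ × ℝ → ℝ)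
    (hφ : ∀ p ∈ U, HasFDerivAt φ
      (φx p • ContinuousLinearMap.fst ℝ ℝ ℝ + φu p • ContinuousLinearMap.snd ℝ ℝ ℝ) p)
    (I : Set ℝ) (hI : IsOpen I) (f f' f'' : ℝ → ℝ)
    (hgraph : ∀ t ∈ I, (t, f t) ∈ U)
    (hf : ∀ t ∈ I, HasDerivAt f (f' t) t)
    (hf' : ∀ t ∈ I, HasDerivAt f' (f'' t) t)
    (hsol : ∀ t ∈ I, f' t = φ (t, f t)) :
    ∀ t ∈ I,
      -(φu (t, f t)) * (f' t - φ (t, f t))^2 = 0 ∧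
      f'' t - φ (t, f t) * φu (t, f t) - φx (t, f t) = 0 :=
  stmt2_general U φ φx φu hφ I hI f f' f'' hgraph hf hf' hsol
end

section
/- For the ODE u' = (W(e^{-u-1})+1)/(1-x), where W is the Lambert W function, the quantity A(φ) = φ_x + φφ_u equals 1/(x-1)² and hence the curvature K = -∂_u(A(φ)) of the associated surface is zero. -/
/-! Writing `c u = W(e^{-u-1}) + 1`, the field is `φ = c(u)/(1-x)`, so
`φ_x + φ φ_u = c (1 + c') / (x-1)²`. Differentiating `W e^W = t` gives `t W'(t) = W/(1+W)`, hence
`c' = -W/(1+W)`, `1 + c' = 1/c` and `c (1 + c') = 1`. -/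

open Real

theorem deriv_div_one_sub_add_mul_deriv {c : ℝ → ℝ} {c' x u : ℝ} (hc : HasDerivAt c c' u)
    (hx : x ≠ 1) :
    deriv (fun x' => c u / (1 - x')) x + c u / (1 - x) * deriv (fun u' => c u' / (1 - x)) u
      = c u * (1 + c') / (x - 1) ^ 2 := by
  have hx' : 1 - x ≠ 0 := sub_ne_zero.mpr hx.symm
  have hdx : HasDerivAt (fun x' => c u / (1 - x')) (c u / (1 - x) ^ 2) x := by
    refine ((hasDerivAt_const x (c u)).div ((hasDerivAt_id' x).const_sub 1) hx').congr_deriv ?_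
    ring
  rw [hdx.deriv, (hc.div_const (1 - x)).deriv]
  field_simp
  ring

theorem pos_of_mul_exp_self_eq {w t : ℝ} (ht : 0 < t) (hw : w * exp w = t) : 0 < w :=
  pos_of_mul_pos_left (hw ▸ ht) (exp_pos w).le

theorem hasDerivAt_lambert_exp_neg_sub_one {W : ℝ → ℝ} (u : ℝ)
    (hW : W (exp (-u - 1)) * exp (W (exp (-u - 1))) = exp (-u - 1))
    (hW' : HasDerivAt W (1 / (exp (W (exp (-u - 1))) * (1 + W (exp (-u - 1))))) (exp (-u - 1))) :
    HasDerivAt (fun u' => W (exp (-u' - 1)) + 1)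
      (-W (exp (-u - 1)) / (1 + W (exp (-u - 1)))) u := by
  have hexp : HasDerivAt (fun u' => exp (-u' - 1)) (exp (-u - 1) * (-1)) u := by
    simpa using ((hasDerivAt_id u).neg.sub_const 1).exp
  refine ((hW'.comp u hexp).add_const 1).congr_deriv ?_
  set t := exp (-u - 1)
  set w := W t
  have hE : exp w ≠ 0 := (exp_pos w).ne'
  rw [← hW]
  field_simp

/-- For the ODE u' = (W(e^{-u-1})+1)/(1-x), with W the Lambert
W function, A(φ) = φ_x + φφ_u = 1/(x-1)², independent of u (hence the
curvature K = -∂_u(A(φ)) of the associated surface vanishes). -/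
theorem stmt12 (W : ℝ → ℝ)
    (hW : ∀ x, 0 < x → W x * Real.exp (W x) = x)
    (hW' : ∀ x, 0 < x → HasDerivAt W (1 / (Real.exp (W x) * (1 + W x))) x)
    (φ : ℝ → ℝ → ℝ)
    (hφdef : ∀ x u, φ x u = (W (Real.exp (-u - 1)) + 1) / (1 - x)) :
    ∀ x u : ℝ, x ≠ 1 →
      deriv (fun x' => φ x' u) x + φ x u * deriv (fun u' => φ x u') u
        = 1 / (x - 1)^2 := by
  intro x u hx
  have ht : 0 < exp (-u - 1) := exp_pos _
  have hc_ne : 1 + W (exp (-u - 1)) ≠ 0 :=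
    (add_pos one_pos (pos_of_mul_exp_self_eq ht (hW _ ht))).ne'
  have hc := hasDerivAt_lambert_exp_neg_sub_one u (hW _ ht) (hW' _ ht)
  simp only [hφdef]
  rw [deriv_div_one_sub_add_mul_deriv hc hx]
  congr 1
  field_simp
  ring
end

section
/- Suppose the deformed curvature K_ε is a constant k ∈ ℝ and δ = δ(x) is a nonzero solution of δ'' + kδ = 0 on an interval. Then either 𝔖_ε(δ) = 0 (so e^{-ε}δ is a symmetrizing factor, i.e. e^ε/δ is an integrating factor where δ ≠ 0), or 𝔗_ε(𝔖_ε(δ)) = 0 (so e^ε·𝔖_ε(δ) is an integrating factor where 𝔖_ε(δ) ≠ 0). In either case ∂_u((e^ε h)φ) + ∂_x(e^ε h) = 0 for the corresponding function h. -/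
/-- The vector field A = ∂_x + φ∂_u acting as a derivation on functions. -/
noncomputable def Aop (φ f : ℝ × ℝ → ℝ) (p : ℝ × ℝ) : ℝ :=
  fderiv ℝ f p ((1:ℝ), φ p)

/-- Δ_ε = A(ε) + φ_u. -/
noncomputable def Δop (φ ε : ℝ × ℝ → ℝ) (p : ℝ × ℝ) : ℝ :=
  Aop φ ε p + fderiv ℝ φ p ((0:ℝ), (1:ℝ))

/-- Deformed Gaussian curvature K_ε = -A(Δ_ε) - Δ_ε². -/
noncomputable def Kdef (φ ε : ℝ × ℝ → ℝ) (p : ℝ × ℝ) : ℝ :=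
  -(Aop φ (Δop φ ε) p) - (Δop φ ε p)^2

private lemma hasFDerivAt_comp_fst {g : ℝ → ℝ} {d : ℝ} {p : ℝ × ℝ} (hg : HasDerivAt g d p.1) :
    HasFDerivAt (fun q : ℝ × ℝ => g q.1)
      ((ContinuousLinearMap.smulRight (1 : ℝ →L[ℝ] ℝ) d).comp
        (ContinuousLinearMap.fst ℝ ℝ ℝ)) p :=
  hg.hasFDerivAt.comp p hasFDerivAt_fst

private lemma fderiv_comp_fst_apply {g : ℝ → ℝ} {d : ℝ} {p : ℝ × ℝ} (hg : HasDerivAt g d p.1)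
    (v : ℝ × ℝ) : fderiv ℝ (fun q : ℝ × ℝ => g q.1) p v = d * v.1 := by
  rw [(hasFDerivAt_comp_fst hg).fderiv]
  simp [mul_comm]

private lemma Aop_fst (φ : ℝ × ℝ → ℝ) {g : ℝ → ℝ} (hg : Differentiable ℝ g) (p : ℝ × ℝ) :
    Aop φ (fun q => g q.1) p = deriv g p.1 := by
  unfold Aop
  rw [fderiv_comp_fst_apply (hg p.1).hasDerivAt]
  ring

private lemma pde_reduce (φ h : ℝ × ℝ → ℝ) (p : ℝ × ℝ) (hh : DifferentiableAt ℝ h p)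
    (hφ : DifferentiableAt ℝ φ p) :
    fderiv ℝ (fun q => h q * φ q) p ((0:ℝ), (1:ℝ)) + fderiv ℝ h p ((1:ℝ), (0:ℝ))
      = Aop φ h p + h p * fderiv ℝ φ p ((0:ℝ), (1:ℝ)) := by
  rw [fderiv_fun_mul hh hφ]
  unfold Aop
  have hv : ((1:ℝ), φ p) = ((1:ℝ), (0:ℝ)) + φ p • ((0:ℝ), (1:ℝ)) := by simp
  rw [hv, map_add, map_smul]
  simp only [ContinuousLinearMap.add_apply, ContinuousLinearMap.smul_apply, smul_eq_mul]
  ring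

/-- If K_ε ≡ k is constant and δ = δ(x) solves δ'' + kδ = 0,
then A(A(δ)) + kδ = 0 and hence 𝔗_ε(𝔖_ε(δ)) = 0; consequently, if
𝔖_ε(δ) vanishes then e^ε/δ satisfies the integrating factor PDE (where δ ≠ 0),
and if 𝔖_ε(δ) is nonvanishing then e^ε·𝔖_ε(δ) satisfies the integrating
factor PDE  ∂_u((e^ε h)φ) + ∂_x(e^ε h) = 0. -/
theorem stmt18 (φ ε : ℝ × ℝ → ℝ)
    (hφ : ContDiff ℝ (⊤ : ℕ∞) φ) (hε : ContDiff ℝ (⊤ : ℕ∞) ε)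
    (k : ℝ) (hK : ∀ p, Kdef φ ε p = k)
    (δ : ℝ → ℝ) (hδ : ContDiff ℝ (⊤ : ℕ∞) δ)
    (hODE : ∀ x, deriv (deriv δ) x + k * δ x = 0) :
    (∀ p : ℝ × ℝ, Aop φ (Aop φ (fun q => δ q.1)) p + k * δ p.1 = 0) ∧
    (∀ p : ℝ × ℝ,
        Aop φ (fun q => Aop φ (fun r => δ r.1) q - Δop φ ε q * δ q.1) p
          + Δop φ ε p * (Aop φ (fun r => δ r.1) p - Δop φ ε p * δ p.1) = 0) ∧
    ((∀ p, Aop φ (fun r => δ r.1) p - Δop φ ε p * δ p.1 = 0) →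
      ∀ p, δ p.1 ≠ 0 →
        fderiv ℝ (fun q => (Real.exp (ε q) / δ q.1) * φ q) p ((0:ℝ), (1:ℝ))
          + fderiv ℝ (fun q => Real.exp (ε q) / δ q.1) p ((1:ℝ), (0:ℝ)) = 0) ∧
    ((∀ p, Aop φ (fun r => δ r.1) p - Δop φ ε p * δ p.1 ≠ 0) →
      ∀ p : ℝ × ℝ,
        fderiv ℝ (fun q => Real.exp (ε q)
            * (Aop φ (fun r => δ r.1) q - Δop φ ε q * δ q.1) * φ q) p ((0:ℝ), (1:ℝ))
          + fderiv ℝ (fun q => Real.exp (ε q)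
            * (Aop φ (fun r => δ r.1) q - Δop φ ε q * δ q.1)) p ((1:ℝ), (0:ℝ)) = 0) := by
  have hδd : Differentiable ℝ δ := hδ.differentiable (by simp)
  have hδ' : ContDiff ℝ ((⊤:ℕ∞) : WithTop ℕ∞) (deriv δ) :=
    (contDiff_infty_iff_deriv.mp (hδ.of_le (by simp))).2
  have hδ'd : Differentiable ℝ (deriv δ) := hδ'.differentiable (by simp)
  have hφd : Differentiable ℝ φ := hφ.differentiable (by simp)
  have hεd : Differentiable ℝ ε := hε.differentiable (by simp)
  -- smoothness of Δop
  have hfε : ContDiff ℝ ((⊤:ℕ∞) : WithTop ℕ∞) (fderiv ℝ ε) := hε.fderiv_right (by simp)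
  have hfφ : ContDiff ℝ ((⊤:ℕ∞) : WithTop ℕ∞) (fderiv ℝ φ) := hφ.fderiv_right (by simp)
  have hΔ : ContDiff ℝ ((⊤:ℕ∞) : WithTop ℕ∞) (Δop φ ε) := by
    unfold Δop Aop
    exact (hfε.clm_apply (contDiff_const.prodMk (hφ.of_le (by simp)))).add
      (hfφ.clm_apply contDiff_const)
  have hΔd : Differentiable ℝ (Δop φ ε) := hΔ.differentiable (by simp)
  -- rewrite A(δ) as deriv δ ∘ fst
  have hAδp : ∀ q : ℝ × ℝ, Aop φ (fun r => δ r.1) q = deriv δ q.1 := fun q => Aop_fst φ hδd q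
  have hAδ : (fun q : ℝ × ℝ => Aop φ (fun r => δ r.1) q) = fun q => deriv δ q.1 :=
    funext hAδp
  -- differentiability of auxiliary maps
  have hδfst : Differentiable ℝ (fun q : ℝ × ℝ => δ q.1) :=
    fun p => ((hδd p.1).hasDerivAt.hasFDerivAt.comp p hasFDerivAt_fst).differentiableAt
  have hδ'fst : Differentiable ℝ (fun q : ℝ × ℝ => deriv δ q.1) :=
    fun p => ((hδ'd p.1).hasDerivAt.hasFDerivAt.comp p hasFDerivAt_fst).differentiableAt
  -- part 1
  have part1 : ∀ p : ℝ × ℝ, Aop φ (Aop φ (fun q => δ q.1)) p + k * δ p.1 = 0 := by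
    intro p
    have : Aop φ (fun q : ℝ × ℝ => Aop φ (fun r => δ r.1) q) p = deriv (deriv δ) p.1 := by
      rw [hAδ]; exact Aop_fst φ hδ'd p
    simpa [this] using hODE p.1
  -- part 2
  have part2 : ∀ p : ℝ × ℝ,
      Aop φ (fun q => Aop φ (fun r => δ r.1) q - Δop φ ε q * δ q.1) p
        + Δop φ ε p * (Aop φ (fun r => δ r.1) p - Δop φ ε p * δ p.1) = 0 := by
    intro p
    have hKp : -(Aop φ (Δop φ ε) p) - (Δop φ ε p)^2 = k := hK p
    have hA1 : Aop φ (fun q => Aop φ (fun r => δ r.1) q - Δop φ ε q * δ q.1) p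
        = deriv (deriv δ) p.1 -
          (Aop φ (Δop φ ε) p * δ p.1 + Δop φ ε p * deriv δ p.1) := by
      simp only [hAδp]
      unfold Aop
      rw [fderiv_fun_sub (g := fun q : ℝ × ℝ => Δop φ ε q * δ q.1) (hδ'fst p) ((hΔd p).mul (hδfst p)), ContinuousLinearMap.sub_apply,
        fderiv_fun_mul (hΔd p) (hδfst p)]
      simp only [ContinuousLinearMap.add_apply, ContinuousLinearMap.smul_apply, smul_eq_mul]
      rw [fderiv_comp_fst_apply (hδ'd p.1).hasDerivAt, fderiv_comp_fst_apply (hδd p.1).hasDerivAt]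
      ring
    rw [hA1, hAδp p]
    linear_combination hODE p.1 + δ p.1 * hKp
  refine ⟨part1, part2, ?_, ?_⟩
  · -- part 3
    intro hS p hne
    have hεp : DifferentiableAt ℝ ε p := hεd p
    have hinv : HasDerivAt (fun x => (δ x)⁻¹)
        (-(deriv δ p.1) / (δ p.1) ^ 2) p.1 := (hδd p.1).hasDerivAt.inv hne
    have hinvfst : DifferentiableAt ℝ (fun q : ℝ × ℝ => (δ q.1)⁻¹) p :=
      (hasFDerivAt_comp_fst hinv).differentiableAt
    have hexp : DifferentiableAt ℝ (fun q => Real.exp (ε q)) p := hεp.exp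
    have hh : DifferentiableAt ℝ (fun q : ℝ × ℝ => Real.exp (ε q) / δ q.1) p := by
      simp only [div_eq_mul_inv]; exact hexp.mul hinvfst
    rw [pde_reduce φ _ p hh (hφd p)]
    have hAh : Aop φ (fun q : ℝ × ℝ => Real.exp (ε q) / δ q.1) p
        = Real.exp (ε p) * (Aop φ ε p * (δ p.1)⁻¹
            + (-(deriv δ p.1) / (δ p.1) ^ 2)) := by
      unfold Aop
      simp only [div_eq_mul_inv]
      rw [fderiv_fun_mul hexp hinvfst]
      simp only [ContinuousLinearMap.add_apply, ContinuousLinearMap.smul_apply, smul_eq_mul]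
      rw [fderiv_comp_fst_apply hinv, fderiv_exp hεp]
      simp only [ContinuousLinearMap.smul_apply, smul_eq_mul]
      ring
    rw [hAh]
    have hSp := hS p
    rw [Aop_fst φ hδd p] at hSp
    have hD : Δop φ ε p = Aop φ ε p + fderiv ℝ φ p ((0:ℝ), (1:ℝ)) := rfl
    rw [hD] at hSp
    have hδ2 : (δ p.1) ^ 2 ≠ 0 := pow_ne_zero 2 hne
    field_simp
    linear_combination (-Real.exp (ε p)) * hSp
  · -- part 4
    intro _ p
    have hεp : DifferentiableAt ℝ ε p := hεd p
    have hexp : DifferentiableAt ℝ (fun q => Real.exp (ε q)) p := hεp.exp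
    have hSd : DifferentiableAt ℝ
        (fun q : ℝ × ℝ => deriv δ q.1 - Δop φ ε q * δ q.1) p :=
      (hδ'fst p).sub ((hΔd p).mul (hδfst p))
    have hh : DifferentiableAt ℝ (fun q : ℝ × ℝ =>
        Real.exp (ε q) * (deriv δ q.1 - Δop φ ε q * δ q.1)) p := hexp.mul hSd
    simp only [hAδp]
    rw [pde_reduce φ _ p hh (hφd p)]
    have hAh : Aop φ (fun q : ℝ × ℝ =>
        Real.exp (ε q) * (deriv δ q.1 - Δop φ ε q * δ q.1)) p
        = Real.exp (ε p) * (Aop φ ε p * (deriv δ p.1 - Δop φ ε p * δ p.1)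
            + Aop φ (fun q => deriv δ q.1 - Δop φ ε q * δ q.1) p) := by
      unfold Aop
      rw [fderiv_fun_mul hexp hSd]
      simp only [ContinuousLinearMap.add_apply, ContinuousLinearMap.smul_apply, smul_eq_mul]
      rw [fderiv_exp hεp]
      simp only [ContinuousLinearMap.smul_apply, smul_eq_mul]
      ring
    rw [hAh]
    have h2 := part2 p
    simp only [hAδp] at h2
    have hD : Δop φ ε p = Aop φ ε p + fderiv ℝ φ p ((0:ℝ), (1:ℝ)) := rfl
    rw [hD] at h2 ⊢
    linear_combination Real.exp (ε p) * h2
end
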